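/- arXiv:math/0601168 — 2 statements merged into one kernel-verified Lean document; each statement's English description precedes it below -/
import Mathlib

section
/- Let 𝔨 be a finite-dimensional real Lie algebra whose Killing form κ is negative definite (κ(x,x) < 0 for all x ≠ 0). Let 𝔱 ⊆ 𝔨 be a maximal abelian Lie subalgebra (𝔱 is abelian and is not properly contained in any abelian Lie subalgebra of 𝔨), and let 𝔪 be a Lie subalgebra of 𝔨 with 𝔱 ⊆ 𝔪 and 𝔪 ≠ 𝔨. Then dim_ℝ 𝔨 − dim_ℝ 𝔪 ≥ 2. -/
/-!
If `𝔪` had codimension one, its Killing-orthogonal complement would be a line `ℝ x`, since the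
Killing form is nondegenerate. Invariance of the Killing form makes this line `𝔪`-stable, and
`κ([y, x], x) = κ(y, [x, x]) = 0` together with `κ(x, x) ≠ 0` forces `[𝔪, x] = 0`. Then `𝔱 + ℝ x`
is abelian, so `x ∈ 𝔱 ⊆ 𝔪` by maximality, which contradicts `κ(x, x) ≠ 0`.
-/

open Module

theorem LinearMap.BilinForm.nondegenerate_of_apply_self_ne_zero {R M : Type*} [CommSemiring R]
    [AddCommMonoid M] [Module R M] {B : LinearMap.BilinForm R M} (hB : ∀ x, x ≠ 0 → B x x ≠ 0) :
    B.Nondegenerate :=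
  ⟨fun x hx ↦ by_contra fun h ↦ hB x h (hx x), fun y hy ↦ by_contra fun h ↦ hB y h (hy y)⟩

section Killing

variable {R L : Type*} [LieRing L]

theorem LieSubalgebra.lie_mem_orthogonal_killingForm [CommRing R] [LieAlgebra R L]
    [Module.Free R L] [Module.Finite R L] (m : LieSubalgebra R L) {y x : L} (hy : y ∈ m)
    (hx : x ∈ (killingForm R L).orthogonal m.toSubmodule) :
    ⁅y, x⁆ ∈ (killingForm R L).orthogonal m.toSubmodule := fun z hz ↦ by
  change killingForm R L z ⁅y, x⁆ = 0
  rw [← LieModule.traceForm_apply_lie_apply]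
  exact hx _ (m.lie_mem hz hy)

theorem lie_eq_zero_of_lie_mem_span_singleton [CommRing R] [IsDomain R] [LieAlgebra R L]
    [Module.Free R L] [Module.Finite R L] {x y : L} (hx : killingForm R L x x ≠ 0)
    (h : ⁅y, x⁆ ∈ R ∙ x) : ⁅y, x⁆ = 0 := by
  obtain ⟨c, hc⟩ := Submodule.mem_span_singleton.mp h
  have hc0 : c * killingForm R L x x = 0 := by
    rw [← smul_eq_mul, ← LinearMap.smul_apply, ← map_smul, hc,
      LieModule.traceForm_apply_lie_apply, lie_self, map_zero]
  rw [← hc, (mul_eq_zero.mp hc0).resolve_right hx, zero_smul]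

theorem LieSubalgebra.exists_notMem_forall_lie_eq_zero_of_finrank_add_one [Field R]
    [LieAlgebra R L] [Module.Finite R L] (hL : ∀ x : L, x ≠ 0 → killingForm R L x x ≠ 0)
    (m : LieSubalgebra R L) (hm : finrank R m + 1 = finrank R L) :
    ∃ x ∉ m, ∀ y ∈ m, ⁅y, x⁆ = 0 := by
  set W := (killingForm R L).orthogonal m.toSubmodule
  have hW : finrank R W = 1 := by
    rw [LinearMap.BilinForm.finrank_orthogonal
      (LinearMap.BilinForm.nondegenerate_of_apply_self_ne_zero hL)]
    change _ - finrank R m = 1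
    omega
  obtain ⟨x, hxW, hx0⟩ := W.exists_mem_ne_zero_of_ne_bot fun h ↦ by
    rw [h, finrank_bot] at hW; exact zero_ne_one hW
  have hxx := hL x hx0
  refine ⟨x, fun hxm ↦ hxx (hxW x hxm), fun y hy ↦ ?_⟩
  refine lie_eq_zero_of_lie_mem_span_singleton hxx ?_
  rw [← eq_span_singleton_of_mem_of_finrank_eq_one hW hxW hx0]
  exact m.lie_mem_orthogonal_killingForm hy hxW

end Killing

theorem LieSubalgebra.mem_of_forall_lie_eq_zero_of_maximal_abelian {R L : Type*} [CommRing R]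
    [LieRing L] [LieAlgebra R L] {t : LieSubalgebra R L} (ht_ab : IsLieAbelian t)
    (ht_max : ∀ t' : LieSubalgebra R L, IsLieAbelian t' → t ≤ t' → t' = t) {x : L}
    (hx : ∀ y ∈ t, ⁅y, x⁆ = 0) : x ∈ t := by
  have hcomm : ∀ y ∈ t, ∀ z ∈ t, ⁅y, z⁆ = 0 := fun y hy z hz ↦
    congrArg Subtype.val (ht_ab.trivial ⟨y, hy⟩ ⟨z, hz⟩)
  have habelian : IsLieAbelian (lieSpan R L (insert x t)) := by
    rw [isLieAbelian_lieSpan_iff]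
    rintro a (rfl | ha) b (rfl | hb)
    · exact lie_self _
    · rw [← lie_skew, hx b hb, neg_zero]
    · exact hx a ha
    · exact hcomm a ha b hb
  rw [← ht_max _ habelian (fun y hy ↦ subset_lieSpan (Set.mem_insert_of_mem x hy))]
  exact subset_lieSpan (Set.mem_insert x _)

/-- Key codimension estimate in the proof of Lemma 3.1: let `𝔨` be a finite-dimensional
real Lie algebra whose Killing form is negative definite, let `𝔱 ⊆ 𝔨` be a maximal
abelian Lie subalgebra, and let `𝔪` be a proper Lie subalgebra of `𝔨` containing `𝔱`.
Then the codimension of `𝔪` in `𝔨` is at least `2`. -/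
theorem codim_ge_two_of_contains_maximal_abelian
    {K : Type*} [LieRing K] [LieAlgebra ℝ K] [Module.Finite ℝ K]
    (hkilling : ∀ x : K, x ≠ 0 → killingForm ℝ K x x < 0)
    (t m : LieSubalgebra ℝ K)
    (ht_ab : IsLieAbelian t)
    (ht_max : ∀ t' : LieSubalgebra ℝ K, IsLieAbelian t' → t ≤ t' → t' = t)
    (htm : t ≤ m) (hm : m ≠ ⊤) :
    2 ≤ Module.finrank ℝ K - Module.finrank ℝ m := by
  have hlt : finrank ℝ m < finrank ℝ K :=
    Submodule.finrank_lt ((LieSubalgebra.toSubmodule_eq_top m).not.mpr hm)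
  by_contra! hcodim
  obtain ⟨x, hxm, hx⟩ := m.exists_notMem_forall_lie_eq_zero_of_finrank_add_one
    (fun x hx ↦ (hkilling x hx).ne) (by omega)
  exact hxm (htm (t.mem_of_forall_lie_eq_zero_of_maximal_abelian ht_ab ht_max
    fun y hy ↦ hx y (htm hy)))
end

section
/- Let ι be a finite index set and let (G_i)_{i ∈ ι} be groups such that for each i the quotient group G_i / Z(G_i) has trivial centre (for instance, each G_i / Z(G_i) is a nonabelian simple group). Let G = ∏_{i ∈ ι} G_i and let N be a normal subgroup of G such that for each i, the intersection of N with the i-th factor subgroup G_i ⊆ G is contained in the centre Z(G_i). Then N is contained in the centre Z(G) = ∏_{i ∈ ι} Z(G_i) of G. -/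
/-!
If `x ∈ N` and `g` lies in the `i`-th factor, the commutator `⁅x, g⁆` lies in `N` (by normality)
and in the `i`-th factor, hence is central by hypothesis. So the image of `x i` in
`G i / Z(G i)` is central, hence trivial, i.e. `x i ∈ Z(G i)`.
-/

open commutatorElement

namespace Subgroup

theorem Normal.commutatorElement_mem {G : Type*} [Group G] {N : Subgroup G} (hN : N.Normal)
    {x : G} (hx : x ∈ N) (y : G) : ⁅x, y⁆ ∈ N := by
  simpa only [commutatorElement_def, mul_assoc] using mul_mem hx (hN.conj_mem _ (inv_mem hx) y)

theorem mem_center_of_forall_commutatorElement_mem_center {G : Type*} [Group G]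
    (hcent : center (G ⧸ center G) = ⊥) {a : G} (ha : ∀ g, ⁅a, g⁆ ∈ center G) :
    a ∈ center G := by
  have h : a ∈ comap (QuotientGroup.mk' (center G)) (center (G ⧸ center G)) := by
    rw [← upperCentralSeriesStep_eq_comap_center]
    exact ha
  rwa [hcent, MonoidHom.comap_bot, QuotientGroup.ker_mk'] at h

end Subgroup

theorem Pi.commutatorElement_mulSingle_right {ι : Type*} [DecidableEq ι] {G : ι → Type*}
    [∀ i, Group (G i)] (x : ∀ j, G j) (i : ι) (g : G i) :
    ⁅x, Pi.mulSingle i g⁆ = Pi.mulSingle i ⁅x i, g⁆ := by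
  funext j
  by_cases hj : j = i
  · subst hj
    simp [commutatorElement_def]
  · simp [commutatorElement_def, Pi.mulSingle_eq_of_ne hj]

theorem normal_le_center_of_factor_intersections_central_general
    {ι : Type*} (G : ι → Type*) [∀ i, Group (G i)]
    (hcent : ∀ i, Subgroup.center (G i ⧸ Subgroup.center (G i)) = ⊥)
    (N : Subgroup (∀ i, G i)) (hNnormal : N.Normal)
    (hN : ∀ i, ∀ x : ∀ j, G j, x ∈ N → (∀ j, j ≠ i → x j = 1) →
      x i ∈ Subgroup.center (G i)) :
    N ≤ Subgroup.center (∀ i, G i) := by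
  classical
  intro x hx
  rw [Subgroup.center_pi, Subgroup.mem_pi]
  intro i _
  refine Subgroup.mem_center_of_forall_commutatorElement_mem_center (hcent i) fun g => ?_
  have hmem : ⁅x, Pi.mulSingle i g⁆ ∈ N := hNnormal.commutatorElement_mem hx _
  rw [Pi.commutatorElement_mulSingle_right] at hmem
  simpa using hN i _ hmem fun j hj => Pi.mulSingle_eq_of_ne hj _

/-- Group-theoretic claim in the proof of Proposition 2.5: let `(G i)` be a finite family
of groups such that each quotient `G i / Z(G i)` has trivial centre, and let `N` be a
normal subgroup of the product `∏ i, G i` whose intersection with each factor subgroup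
`G i` is contained in the centre `Z(G i)`.  Then `N` is contained in the centre of the
product. -/
theorem normal_le_center_of_factor_intersections_central
    {ι : Type*} [Finite ι] (G : ι → Type*) [∀ i, Group (G i)]
    (hcent : ∀ i, Subgroup.center (G i ⧸ Subgroup.center (G i)) = ⊥)
    (N : Subgroup (∀ i, G i)) (hNnormal : N.Normal)
    (hN : ∀ i, ∀ x : ∀ j, G j, x ∈ N → (∀ j, j ≠ i → x j = 1) →
      x i ∈ Subgroup.center (G i)) :
    N ≤ Subgroup.center (∀ i, G i) :=
  normal_le_center_of_factor_intersections_central_general G hcent N hNnormal hN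
end
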